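/- arXiv:1705.11152 — 3 statements merged into one kernel-verified Lean document; each statement's English description precedes it below -/
import Mathlib

section
/- Let λ₋ > 0, k̃ > 0, L > 0 with L < (π/2 + arctan(k̃/λ₋))/λ₋, and let V : [0, L] → ℝ be continuous with V(z) ≤ −λ₋² for all z. If p : [0, L] → ℝ is differentiable, solves p'(z) + p(z)² = V(z) on [0, L], and satisfies p(L) = −k̃, then p(z) ≥ λ₋·tan(λ₋·(L − z) − arctan(k̃/λ₋)) for all z ∈ [0, L]. -/
open Real Set

/-! Both `p` and the explicit solution `P z = λ₋ tan (λ₋ (L - z) - arctan (k̃/λ₋))` of `P' + P² = -λ₋²`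
solve Riccati equations with `p' + p² ≤ P' + P²` and the same value at `L`. Their difference
`w = p - P` then satisfies the linear inequality `w' + (p + P) w ≤ 0`, so with the integrating
factor `exp ∫ (p + P)` the product `w · exp ∫ (p + P)` is antitone and vanishes at `L`,
hence is nonnegative on `[0, L]`. The bound on `L` keeps `P` finite on `[0, L]`. -/

theorem nonneg_of_hasDerivAt_add_mul_nonpos {s b : ℝ} {w w' a : ℝ → ℝ}
    (ha : ContinuousOn a (Icc s b))
    (hw : ∀ z ∈ Icc s b, HasDerivAt w (w' z) z)
    (hineq : ∀ z ∈ Icc s b, w' z + a z * w z ≤ 0)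
    (hb : 0 ≤ w b) : ∀ z ∈ Icc s b, 0 ≤ w z := by
  intro z hz
  have hsb : s ≤ b := hz.1.trans hz.2
  set ã : ℝ → ℝ := fun t => a (projIcc s b hsb t)
  have hãc : Continuous ã :=
    ha.comp_continuous (continuous_subtype_val.comp continuous_projIcc)
      fun t => (projIcc s b hsb t).2
  set G : ℝ → ℝ := fun t => w t * exp (∫ u in s..t, ã u)
  have hG : ∀ t ∈ Icc s b,
      HasDerivAt G ((w' t + a t * w t) * exp (∫ u in s..t, ã u)) t := by
    intro t ht
    refine ((hw t ht).mul (hãc.integral_hasStrictDerivAt s t).hasDerivAt.exp).congr_deriv ?_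
    simp only [ã, projIcc_of_mem hsb ht]
    ring
  have hanti : AntitoneOn G (Icc s b) := by
    apply antitoneOn_of_hasDerivWithinAt_nonpos (convex_Icc s b)
    · exact fun t ht => (hG t ht).continuousAt.continuousWithinAt
    · rw [interior_Icc]
      exact fun t ht => (hG t (Ioo_subset_Icc_self ht)).hasDerivWithinAt
    · rw [interior_Icc]
      exact fun t ht => mul_nonpos_of_nonpos_of_nonneg (hineq t (Ioo_subset_Icc_self ht))
        (exp_pos _).le
  have hGz : 0 ≤ G z :=
    (mul_nonneg hb (exp_pos _).le).trans (hanti hz ⟨hsb, le_rfl⟩ hz.2)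
  exact nonneg_of_mul_nonneg_left hGz (exp_pos _)

theorem le_of_riccati_le_of_le_right {s b : ℝ} {p p' P P' : ℝ → ℝ}
    (hp : ∀ z ∈ Icc s b, HasDerivAt p (p' z) z)
    (hP : ∀ z ∈ Icc s b, HasDerivAt P (P' z) z)
    (hle : ∀ z ∈ Icc s b, p' z + p z ^ 2 ≤ P' z + P z ^ 2)
    (hb : P b ≤ p b) : ∀ z ∈ Icc s b, P z ≤ p z := by
  have hdiff := nonneg_of_hasDerivAt_add_mul_nonpos (w := fun z => p z - P z)
    (a := fun z => p z + P z)
    (fun z hz => ((hp z hz).continuousAt.add (hP z hz).continuousAt).continuousWithinAt)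
    (fun z hz => (hp z hz).sub (hP z hz))
    (fun z hz => by nlinarith [hle z hz]) (sub_nonneg.2 hb)
  exact fun z hz => sub_nonneg.1 (hdiff z hz)

theorem hasDerivAt_mul_tan_mul_sub (lam L c z : ℝ) (hcos : cos (lam * (L - z) - c) ≠ 0) :
    HasDerivAt (fun z => lam * tan (lam * (L - z) - c))
      (-lam ^ 2 - (lam * tan (lam * (L - z) - c)) ^ 2) z := by
  have harg : HasDerivAt (fun z => lam * (L - z) - c) (-lam) z := by
    simpa using (((hasDerivAt_id z).const_sub L).const_mul lam).sub_const c
  refine (((hasDerivAt_tan hcos).comp z harg).const_mul lam).congr_deriv ?_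
  rw [one_div, ← inv_one_add_tan_sq hcos, inv_inv]
  ring

theorem cos_mul_sub_sub_pos {lam L c z : ℝ} (hlam : 0 < lam) (hc : c < π / 2)
    (hL : L < (π / 2 + c) / lam) (hz : z ∈ Icc 0 L) : 0 < cos (lam * (L - z) - c) := by
  have hlamL : lam * L < π / 2 + c := (lt_div_iff₀' hlam).1 hL
  have hmono : lam * (L - z) ≤ lam * L := by nlinarith [hz.1]
  have hnonneg : 0 ≤ lam * (L - z) := mul_nonneg hlam.le (sub_nonneg.2 hz.2)
  exact cos_pos_of_mem_Ioo ⟨by linarith, by linarith⟩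

theorem stmt_6_general (L lamm ktil : ℝ) (hlam : 0 < lamm)
    (hLsmall : L < (π / 2 + Real.arctan (ktil / lamm)) / lamm)
    (V p p' : ℝ → ℝ)
    (hVle : ∀ z ∈ Set.Icc 0 L, V z ≤ -lamm ^ 2)
    (hd : ∀ z ∈ Set.Icc 0 L, HasDerivAt p (p' z) z)
    (heq : ∀ z ∈ Set.Icc 0 L, p' z + p z ^ 2 = V z)
    (hbdry : p L = -ktil) :
    ∀ z ∈ Set.Icc 0 L,
      lamm * Real.tan (lamm * (L - z) - Real.arctan (ktil / lamm)) ≤ p z := by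
  set c := arctan (ktil / lamm)
  have hP : ∀ z ∈ Icc 0 L, HasDerivAt (fun z => lamm * tan (lamm * (L - z) - c))
      (-lamm ^ 2 - (lamm * tan (lamm * (L - z) - c)) ^ 2) z := fun z hz =>
    hasDerivAt_mul_tan_mul_sub lamm L c z
      (cos_mul_sub_sub_pos hlam (arctan_lt_pi_div_two _) hLsmall hz).ne'
  refine le_of_riccati_le_of_le_right hd hP (fun z hz => ?_) ?_
  · linarith [heq z hz, hVle z hz]
  · simp only [sub_self, mul_zero, zero_sub, tan_neg, c, tan_arctan, hbdry]
    field_simp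
    rfl

/-- Riccati comparison with backward boundary condition: if p' + p² = V ≤ -λ₋²
and p(L) = -k̃, then p(z) ≥ λ₋ tan(λ₋(L - z) - arctan(k̃/λ₋)). -/
theorem stmt_6 (L lamm ktil : ℝ) (hlam : 0 < lamm) (hk : 0 < ktil) (hL : 0 < L)
    (hLsmall : L < (π / 2 + Real.arctan (ktil / lamm)) / lamm)
    (V p p' : ℝ → ℝ)
    (hV : ContinuousOn V (Set.Icc 0 L))
    (hVle : ∀ z ∈ Set.Icc 0 L, V z ≤ -lamm ^ 2)
    (hd : ∀ z ∈ Set.Icc 0 L, HasDerivAt p (p' z) z)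
    (heq : ∀ z ∈ Set.Icc 0 L, p' z + p z ^ 2 = V z)
    (hbdry : p L = -ktil) :
    ∀ z ∈ Set.Icc 0 L,
      lamm * Real.tan (lamm * (L - z) - Real.arctan (ktil / lamm)) ≤ p z :=
  stmt_6_general L lamm ktil hlam hLsmall V p p' hVle hd heq hbdry
end

section
/- Let T > 0, let R = (0, L) × (0, T], and consider the operator P u = −u_t + u_{zz} + a(z, u, u_z) where a(z, q, p) = 2qp + a₁(z)p − 2·tan(z)·q² + a₂(z)q with a₁, a₂ continuous and bounded on [0, L], tan(z) ≥ 0 on [0, L], and tan bounded on [0, L]. Suppose u, v ∈ C²,¹(R) ∩ C(closure of R) are bounded, satisfy P u ≥ P v in R, u ≤ v on the parabolic boundary of R, and u_z is bounded above on R. Then u ≤ v on the closure of R. -/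
open Real Set Filter Topology
open Real Set Filter Topology

lemma aux_left (g : ℝ → ℝ) (g' t₀ : ℝ) (h : HasDerivAt g g' t₀)
    (hmax : ∀ᶠ t in 𝓝[<] t₀, g t ≤ g t₀) : 0 ≤ g' := by
  by_contra hneg
  push_neg at hneg
  have hs := hasDerivAt_iff_tendsto_slope.1 h
  have h1 : ∀ᶠ t in 𝓝[≠] t₀, slope g t₀ t < 0 := hs.eventually_lt_const hneg
  have h2 : 𝓝[Iio t₀] t₀ ≤ 𝓝[≠] t₀ :=
    nhdsWithin_mono _ (fun x hx => ne_of_lt hx)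
  have h3 := ((h1.filter_mono h2).and hmax).and self_mem_nhdsWithin
  obtain ⟨t, ⟨hslope, hle⟩, ht⟩ := h3.exists
  have hlt : t < t₀ := ht
  have : 0 ≤ slope g t₀ t := by
    rw [slope_def_field]
    exact div_nonneg_of_nonpos (by linarith) (by linarith)
  linarith

lemma aux_second (a b x₀ : ℝ) (f f' : ℝ → ℝ) (f'' : ℝ)
    (hx : x₀ ∈ Ioo a b)
    (hd : ∀ x ∈ Ioo a b, HasDerivAt f (f' x) x)
    (hmax : ∀ x ∈ Ioo a b, f x ≤ f x₀)
    (h0 : f' x₀ = 0)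
    (h2 : HasDerivAt f' f'' x₀) : f'' ≤ 0 := by
  by_contra hpos
  push_neg at hpos
  have hs := hasDerivAt_iff_tendsto_slope.1 h2
  have h1 : ∀ᶠ t in 𝓝[≠] x₀, 0 < slope f' x₀ t := hs.eventually_const_lt hpos
  have h1' : ∀ᶠ t in 𝓝[>] x₀, 0 < slope f' x₀ t :=
    h1.filter_mono (nhdsWithin_mono _ (fun x hx => ne_of_gt hx))
  have h2' : ∀ᶠ t in 𝓝[>] x₀, t < b :=
    eventually_nhdsWithin_of_eventually_nhds (eventually_lt_nhds hx.2)
  have hmem : {t | 0 < slope f' x₀ t ∧ t < b} ∈ 𝓝[>] x₀ := h1'.and h2'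
  rw [mem_nhdsGT_iff_exists_Ioc_subset] at hmem
  obtain ⟨y, hy, hsub⟩ := hmem
  have hyx : x₀ < y := hy
  have hyb : y < b := (hsub ⟨hyx, le_refl y⟩).2
  have hsubset : Icc x₀ y ⊆ Ioo a b := fun x hxm =>
    ⟨lt_of_lt_of_le hx.1 hxm.1, lt_of_le_of_lt hxm.2 hyb⟩
  have hmono : StrictMonoOn f (Icc x₀ y) := by
    apply strictMonoOn_of_deriv_pos (convex_Icc x₀ y)
    · exact fun x hxm => ((hd x (hsubset hxm)).continuousAt).continuousWithinAt
    · intro x hxm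
      rw [interior_Icc] at hxm
      have hx' : x ∈ Ioo a b := hsubset ⟨hxm.1.le, hxm.2.le⟩
      rw [(hd x hx').deriv]
      have := (hsub ⟨hxm.1, hxm.2.le⟩).1
      rw [slope_def_field, h0] at this
      have hxx : 0 < x - x₀ := by linarith [hxm.1]
      by_contra hle
      push_neg at hle
      have : (f' x - 0) / (x - x₀) ≤ 0 := div_nonpos_of_nonpos_of_nonneg (by linarith) hxx.le
      linarith
  have : f x₀ < f y := hmono (left_mem_Icc.2 hyx.le) (right_mem_Icc.2 hyx.le) hyx
  have := hmax y ⟨lt_trans hx.1 hyx, hyb⟩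
  linarith


set_option maxHeartbeats 1000000 in
/-- Comparison principle for the semi-linear parabolic operator
P u = -u_t + u_{zz} + a(z, u, u_z) with
a(z,q,p) = 2qp + a₁(z)p - 2 tan(z) q² + a₂(z) q on R = (0,L) × (0,T]. -/
theorem stmt_9 (L T : ℝ) (hL : 0 < L) (hT : 0 < T) (a₁ a₂ : ℝ → ℝ)
    (ha₁c : ContinuousOn a₁ (Set.Icc 0 L)) (ha₂c : ContinuousOn a₂ (Set.Icc 0 L))
    (ha₁b : ∃ A, ∀ z ∈ Set.Icc 0 L, |a₁ z| ≤ A)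
    (ha₂b : ∃ A, ∀ z ∈ Set.Icc 0 L, |a₂ z| ≤ A)
    (htan0 : ∀ z ∈ Set.Icc 0 L, 0 ≤ Real.tan z)
    (htanb : ∃ A, ∀ z ∈ Set.Icc 0 L, |Real.tan z| ≤ A)
    (u v uz uzz ut vz vzz vt : ℝ → ℝ → ℝ)
    -- u, v are C²'¹ on R = (0,L) × (0,T]
    (hu1 : ∀ z t, z ∈ Set.Ioo 0 L → t ∈ Set.Ioc 0 T →
      HasDerivAt (fun s => u s t) (uz z t) z)
    (hu2 : ∀ z t, z ∈ Set.Ioo 0 L → t ∈ Set.Ioc 0 T →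
      HasDerivAt (fun s => uz s t) (uzz z t) z)
    (hu3 : ∀ z t, z ∈ Set.Ioo 0 L → t ∈ Set.Ioc 0 T →
      HasDerivAt (fun τ => u z τ) (ut z t) t)
    (hv1 : ∀ z t, z ∈ Set.Ioo 0 L → t ∈ Set.Ioc 0 T →
      HasDerivAt (fun s => v s t) (vz z t) z)
    (hv2 : ∀ z t, z ∈ Set.Ioo 0 L → t ∈ Set.Ioc 0 T →
      HasDerivAt (fun s => vz s t) (vzz z t) z)
    (hv3 : ∀ z t, z ∈ Set.Ioo 0 L → t ∈ Set.Ioc 0 T →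
      HasDerivAt (fun τ => v z τ) (vt z t) t)
    -- continuity up to the closure
    (hucont : ContinuousOn (fun p : ℝ × ℝ => u p.1 p.2) (Set.Icc 0 L ×ˢ Set.Icc 0 T))
    (hvcont : ContinuousOn (fun p : ℝ × ℝ => v p.1 p.2) (Set.Icc 0 L ×ˢ Set.Icc 0 T))
    -- boundedness of u, v
    (hub : ∃ M, ∀ z ∈ Set.Icc 0 L, ∀ t ∈ Set.Icc 0 T, |u z t| ≤ M)
    (hvb : ∃ M, ∀ z ∈ Set.Icc 0 L, ∀ t ∈ Set.Icc 0 T, |v z t| ≤ M)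
    -- P u ≥ P v in R
    (hPuv : ∀ z t, z ∈ Set.Ioo 0 L → t ∈ Set.Ioc 0 T →
      -vt z t + vzz z t + (2 * v z t * vz z t + a₁ z * vz z t
          - 2 * Real.tan z * (v z t) ^ 2 + a₂ z * v z t)
        ≤ -ut z t + uzz z t + (2 * u z t * uz z t + a₁ z * uz z t
          - 2 * Real.tan z * (u z t) ^ 2 + a₂ z * u z t))
    -- u ≤ v on the parabolic boundary
    (hpb : ∀ z t, (z, t) ∈ ({(0 : ℝ)} ×ˢ Set.Icc (0:ℝ) T) ∪
        (Set.Icc (0:ℝ) L ×ˢ {(0 : ℝ)}) ∪ ({L} ×ˢ Set.Icc (0:ℝ) T) →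
      u z t ≤ v z t)
    -- u_z bounded above
    (huzb : ∃ K, ∀ z t, z ∈ Set.Ioo 0 L → t ∈ Set.Ioc 0 T → uz z t ≤ K) :
    ∀ z ∈ Set.Icc 0 L, ∀ t ∈ Set.Icc 0 T, u z t ≤ v z t := by
  
  classical
  obtain ⟨K, hK⟩ := huzb
  obtain ⟨Mu, hMu⟩ := hub
  obtain ⟨Mv, hMv⟩ := hvb
  obtain ⟨A₂, hA₂⟩ := ha₂b
  obtain ⟨At, hAt⟩ := htanb
  set lam : ℝ := 2 * K + 2 * At * (Mu + Mv) + A₂ + 1 with hlam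
  set w : ℝ × ℝ → ℝ := fun p => (u p.1 p.2 - v p.1 p.2) * Real.exp (-lam * p.2) with hw
  set S : Set (ℝ × ℝ) := Set.Icc 0 L ×ˢ Set.Icc 0 T with hS
  have hScomp : IsCompact S := (isCompact_Icc.prod isCompact_Icc)
  have hSne : S.Nonempty :=
    ⟨(0, 0), Set.mk_mem_prod ⟨le_refl 0, hL.le⟩ ⟨le_refl 0, hT.le⟩⟩
  have hwcont : ContinuousOn w S := by
    apply ContinuousOn.mul (hucont.sub hvcont)
    exact (Real.continuous_exp.comp (continuous_const.mul continuous_snd)).continuousOn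
  obtain ⟨p₀, hp₀S, hmax⟩ := hScomp.exists_isMaxOn hSne hwcont
  obtain ⟨z₀, t₀⟩ := p₀
  have hz₀m : z₀ ∈ Set.Icc 0 L := hp₀S.1
  have ht₀m : t₀ ∈ Set.Icc 0 T := hp₀S.2
  have hmax' : ∀ z ∈ Set.Icc 0 L, ∀ t ∈ Set.Icc 0 T, w (z, t) ≤ w (z₀, t₀) :=
    fun z hz t ht => hmax (Set.mk_mem_prod hz ht)
  -- it suffices to show w (z₀, t₀) ≤ 0
  suffices hkey : w (z₀, t₀) ≤ 0 by
    intro z hz t ht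
    have := le_trans (hmax' z hz t ht) hkey
    have hE : 0 < Real.exp (-lam * t) := Real.exp_pos _
    simp only [hw] at this
    nlinarith
  by_contra hpos
  push_neg at hpos
  have hE₀ : 0 < Real.exp (-lam * t₀) := Real.exp_pos _
  have hd : 0 < u z₀ t₀ - v z₀ t₀ := by
    simp only [hw] at hpos
    nlinarith
  -- (z₀, t₀) is not on the parabolic boundary
  have hz₀0 : z₀ ≠ 0 := by
    intro h
    have := hpb z₀ t₀ (Or.inl (Or.inl ⟨by simp [h], ht₀m⟩))
    linarith
  have hz₀L : z₀ ≠ L := by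
    intro h
    have := hpb z₀ t₀ (Or.inr ⟨by simp [h], ht₀m⟩)
    linarith
  have ht₀0 : t₀ ≠ 0 := by
    intro h
    have := hpb z₀ t₀ (Or.inl (Or.inr ⟨hz₀m, by simp [h]⟩))
    linarith
  have hz₀ : z₀ ∈ Set.Ioo 0 L := ⟨lt_of_le_of_ne hz₀m.1 (Ne.symm hz₀0), lt_of_le_of_ne hz₀m.2 hz₀L⟩
  have ht₀ : t₀ ∈ Set.Ioc 0 T := ⟨lt_of_le_of_ne ht₀m.1 (Ne.symm ht₀0), ht₀m.2⟩
  set E : ℝ := Real.exp (-lam * t₀) with hE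
  -- z-direction analysis
  set f : ℝ → ℝ := fun z => (u z t₀ - v z t₀) * E with hf
  set f' : ℝ → ℝ := fun z => (uz z t₀ - vz z t₀) * E with hf'
  have hfd : ∀ x ∈ Set.Ioo 0 L, HasDerivAt f (f' x) x := fun x hx =>
    ((hu1 x t₀ hx ht₀).sub (hv1 x t₀ hx ht₀)).mul_const E
  have hfmax : ∀ x ∈ Set.Ioo 0 L, f x ≤ f z₀ := fun x hx =>
    hmax' x (Set.mem_Icc_of_Ioo hx) t₀ ht₀m
  have hlocmax : IsLocalMax f z₀ :=
    Filter.eventually_of_mem (isOpen_Ioo.mem_nhds hz₀) hfmax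
  have hf'0 : f' z₀ = 0 := hlocmax.hasDerivAt_eq_zero (hfd z₀ hz₀)
  have heqz : uz z₀ t₀ = vz z₀ t₀ := by
    have := hf'0
    simp only [hf'] at this
    rcases mul_eq_zero.1 this with h | h
    · linarith
    · exact absurd h (ne_of_gt hE₀)
  have hf'' : HasDerivAt f' ((uzz z₀ t₀ - vzz z₀ t₀) * E) z₀ :=
    ((hu2 z₀ t₀ hz₀ ht₀).sub (hv2 z₀ t₀ hz₀ ht₀)).mul_const E
  have hzz : uzz z₀ t₀ ≤ vzz z₀ t₀ := by
    have := aux_second 0 L z₀ f f' ((uzz z₀ t₀ - vzz z₀ t₀) * E) hz₀ hfd hfmax hf'0 hf''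
    nlinarith
  -- t-direction analysis
  set g : ℝ → ℝ := fun τ => (u z₀ τ - v z₀ τ) * Real.exp (-lam * τ) with hg
  have hexp : HasDerivAt (fun τ => Real.exp (-lam * τ)) (E * -lam) t₀ := by
    have h1 : HasDerivAt (fun τ : ℝ => -lam * τ) (-lam) t₀ := by
      simpa using (hasDerivAt_id t₀).const_mul (-lam)
    simpa [hE] using h1.exp
  have hgd : HasDerivAt g ((ut z₀ t₀ - vt z₀ t₀) * E + (u z₀ t₀ - v z₀ t₀) * (E * -lam)) t₀ :=
    ((hu3 z₀ t₀ hz₀ ht₀).sub (hv3 z₀ t₀ hz₀ ht₀)).mul hexp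
  have hgmax : ∀ᶠ t in nhdsWithin t₀ (Set.Iio t₀), g t ≤ g t₀ := by
    have h1 : ∀ᶠ t in nhdsWithin t₀ (Set.Iio t₀), 0 < t :=
      eventually_nhdsWithin_of_eventually_nhds (eventually_gt_nhds ht₀.1)
    filter_upwards [h1, self_mem_nhdsWithin] with t ht1 ht2
    have : w (z₀, t) ≤ w (z₀, t₀) :=
      hmax' z₀ hz₀m t ⟨ht1.le, le_trans (le_of_lt ht2) ht₀.2⟩
    simpa [hw, hg, hE] using this
  have hgder : 0 ≤ (ut z₀ t₀ - vt z₀ t₀) * E + (u z₀ t₀ - v z₀ t₀) * (E * -lam) :=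
    aux_left g _ t₀ hgd hgmax
  have htder : lam * (u z₀ t₀ - v z₀ t₀) ≤ ut z₀ t₀ - vt z₀ t₀ := by nlinarith
  -- final computation
  have hP := hPuv z₀ t₀ hz₀ ht₀
  have hKz : uz z₀ t₀ ≤ K := hK z₀ t₀ hz₀ ht₀
  have hMuz := abs_le.1 (hMu z₀ hz₀m t₀ ht₀m)
  have hMvz := abs_le.1 (hMv z₀ hz₀m t₀ ht₀m)
  have hA2z := abs_le.1 (hA₂ z₀ hz₀m)
  have hAtz := abs_le.1 (hAt z₀ hz₀m)
  have htn0 : 0 ≤ Real.tan z₀ := htan0 z₀ hz₀m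
  rw [heqz] at hP hKz
  rw [hlam] at htder
  have hMupos : 0 ≤ Mu :=
    le_trans (abs_nonneg _) (hMu 0 (Set.left_mem_Icc.2 hL.le) 0 (Set.left_mem_Icc.2 hT.le))
  have hMvpos : 0 ≤ Mv :=
    le_trans (abs_nonneg _) (hMv 0 (Set.left_mem_Icc.2 hL.le) 0 (Set.left_mem_Icc.2 hT.le))
  have e1 : 0 ≤ (u z₀ t₀ - v z₀ t₀) * (K - vz z₀ t₀) := mul_nonneg hd.le (by linarith)
  have e2 : 0 ≤ (u z₀ t₀ - v z₀ t₀) * (A₂ - a₂ z₀) := mul_nonneg hd.le (by linarith)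
  have e3 : 0 ≤ (u z₀ t₀ - v z₀ t₀) *
      (Real.tan z₀ * (u z₀ t₀ + v z₀ t₀) + At * (Mu + Mv)) := by
    apply mul_nonneg hd.le
    nlinarith [mul_nonneg htn0 (show (0:ℝ) ≤ u z₀ t₀ + v z₀ t₀ + Mu + Mv by linarith),
      mul_nonneg (sub_nonneg.2 hAtz.2) (show (0:ℝ) ≤ Mu + Mv by linarith)]
  nlinarith [hP, htder, hzz, e1, e2, e3, hd]
end

section
/- Let n ≥ 2, D ∈ (0, π], and let p, q : [0, D/2) → ℝ be differentiable solutions of the Riccati equation y'(z) + y(z)² − (n−1)·tan(z)·y(z) + μ = c_y/cos²(z) with constants c_p > c_q respectively (same μ), and p(0) = q(0) = 0. Then p(z) > q(z) for all z ∈ (0, D/2). -/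
open Real Set Filter Topology

/-- Strict monotonicity in the parameter c of solutions to the Riccati equation
y' + y² - (n-1) tan(z) y + μ = c / cos²(z) with y(0) = 0. -/
theorem stmt_19 (n : ℕ) (hn : 2 ≤ n) (D : ℝ) (hD : 0 < D) (hDπ : D ≤ π)
    (μ cp cq : ℝ) (hc : cq < cp) (p q p' q' : ℝ → ℝ)
    (hp : ∀ z ∈ Set.Ico 0 (D / 2), HasDerivAt p (p' z) z)
    (hq : ∀ z ∈ Set.Ico 0 (D / 2), HasDerivAt q (q' z) z)
    (hpeq : ∀ z ∈ Set.Ico 0 (D / 2),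
      p' z + p z ^ 2 - ((n : ℝ) - 1) * Real.tan z * p z + μ = cp / (Real.cos z) ^ 2)
    (hqeq : ∀ z ∈ Set.Ico 0 (D / 2),
      q' z + q z ^ 2 - ((n : ℝ) - 1) * Real.tan z * q z + μ = cq / (Real.cos z) ^ 2)
    (hp0 : p 0 = 0) (hq0 : q 0 = 0) :
    ∀ z ∈ Set.Ioo 0 (D / 2), q z < p z := by
  intro z0 hz0
  by_contra hcon
  push_neg at hcon
  set u : ℝ → ℝ := fun z => p z - q z with hudef
  have hu' : ∀ z ∈ Set.Ico 0 (D / 2), HasDerivAt u (p' z - q' z) z :=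
    fun z hz => (hp z hz).sub (hq z hz)
  have hpi : (0:ℝ) < π := Real.pi_pos
  -- key: at a zero of u in the domain, the derivative of u is positive
  have key : ∀ z ∈ Set.Ico 0 (D / 2), u z = 0 → 0 < p' z - q' z := by
    intro z hz h0
    have hcz : 0 < Real.cos z := by
      apply Real.cos_pos_of_mem_Ioo
      constructor
      · linarith [hz.1]
      · linarith [hz.2]
    have h1 := hpeq z hz
    have h2 := hqeq z hz
    have hqp : q z = p z := by
      have : p z - q z = 0 := h0
      linarith
    rw [hqp] at h2
    have hdiff : p' z - q' z = cp / (Real.cos z) ^ 2 - cq / (Real.cos z) ^ 2 := by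
      linarith
    rw [hdiff, div_sub_div_same]
    exact div_pos (by linarith) (by positivity)
  have h0mem : (0:ℝ) ∈ Set.Ico 0 (D / 2) := ⟨le_refl _, by linarith [hz0.2, hz0.1]⟩
  have hu0 : u 0 = 0 := by simp [hudef, hp0, hq0]
  have hd0 : 0 < p' 0 - q' 0 := key 0 h0mem hu0
  -- u is positive just to the right of 0
  have hT : Filter.Tendsto (slope u 0) (𝓝[≠] (0:ℝ)) (𝓝 (p' 0 - q' 0)) :=
    (hasDerivAt_iff_tendsto_slope).1 (hu' 0 h0mem)
  have hTr : Filter.Tendsto (slope u 0) (𝓝[>] (0:ℝ)) (𝓝 (p' 0 - q' 0)) :=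
    hT.mono_left (nhdsWithin_mono _ (fun x hx => ne_of_gt hx))
  have hslope_pos : ∀ᶠ y in 𝓝[>] (0:ℝ), 0 < slope u 0 y :=
    hTr.eventually (eventually_gt_nhds hd0)
  have hupos0 : ∀ᶠ y in 𝓝[>] (0:ℝ), 0 < u y := by
    filter_upwards [hslope_pos, self_mem_nhdsWithin] with y hy hy'
    have hy0 : (0:ℝ) < y := hy'
    have : slope u 0 y = u y / y := by
      simp [slope_def_field, hu0]
    rw [this] at hy
    have := mul_pos hy hy0
    rwa [div_mul_cancel₀ _ (ne_of_gt hy0)] at this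
  obtain ⟨δ, hδ0, hδ⟩ := (mem_nhdsGT_iff_exists_Ioo_subset).1 hupos0
  have hδpos : (0:ℝ) < δ := hδ0
  -- the set of "bad" points
  set T : Set ℝ := {x | x ∈ Set.Ioc 0 z0 ∧ u x ≤ 0} with hTdef
  have hz0T : z0 ∈ T := ⟨⟨hz0.1, le_refl _⟩, by simp [hudef]; linarith⟩
  have hTne : T.Nonempty := ⟨z0, hz0T⟩
  have hTbdd : BddBelow T := ⟨0, fun x hx => le_of_lt hx.1.1⟩
  set s : ℝ := sInf T with hsdef
  have hδle : ∀ x ∈ T, δ ≤ x := by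
    intro x hx
    by_contra hlt
    push_neg at hlt
    have : 0 < u x := hδ ⟨hx.1.1, hlt⟩
    linarith [hx.2]
  have hsδ : δ ≤ s := le_csInf hTne hδle
  have hsz0 : s ≤ z0 := csInf_le hTbdd hz0T
  have hspos : 0 < s := lt_of_lt_of_le hδpos hsδ
  have hsmem : s ∈ Set.Ico 0 (D / 2) := ⟨le_of_lt hspos, lt_of_le_of_lt hsz0 hz0.2⟩
  have hcontu : ContinuousAt u s := (hu' s hsmem).continuousAt
  -- u is positive on (0, s)
  have hposlt : ∀ y, 0 < y → y < s → 0 < u y := by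
    intro y hy1 hy2
    by_contra hle
    push_neg at hle
    have : y ∈ T := ⟨⟨hy1, le_trans (le_of_lt hy2) hsz0⟩, hle⟩
    have := csInf_le hTbdd this
    linarith
  -- u s ≤ 0
  have hscl : s ∈ closure T := csInf_mem_closure hTne hTbdd
  have hNB : (𝓝[T] s).NeBot := mem_closure_iff_nhdsWithin_neBot.1 hscl
  have hule : u s ≤ 0 := by
    refine le_of_tendsto (hcontu.continuousWithinAt (s := T)) ?_
    filter_upwards [self_mem_nhdsWithin] with y hy
    exact hy.2
  -- u s ≥ 0
  have hIoo_mem : Set.Ioo (0:ℝ) s ∈ 𝓝[<] s := by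
    apply mem_nhdsWithin.2
    exact ⟨Set.Ioi 0, isOpen_Ioi, hspos, fun y hy => ⟨hy.1, hy.2⟩⟩
  have huge : 0 ≤ u s := by
    refine ge_of_tendsto (hcontu.continuousWithinAt (s := Set.Iio s)) ?_
    filter_upwards [hIoo_mem] with y hy
    exact le_of_lt (hposlt y hy.1 hy.2)
  have hus : u s = 0 := le_antisymm hule huge
  have hds : 0 < p' s - q' s := key s hsmem hus
  -- left slope at s is nonpositive
  have hTs : Filter.Tendsto (slope u s) (𝓝[≠] s) (𝓝 (p' s - q' s)) :=
    (hasDerivAt_iff_tendsto_slope).1 (hu' s hsmem)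
  have hTsl : Filter.Tendsto (slope u s) (𝓝[<] s) (𝓝 (p' s - q' s)) :=
    hTs.mono_left (nhdsWithin_mono _ (fun x hx => ne_of_lt hx))
  have hle0 : p' s - q' s ≤ 0 := by
    refine le_of_tendsto hTsl ?_
    filter_upwards [hIoo_mem] with y hy
    have hy1 : 0 < u y := hposlt y hy.1 hy.2
    have : slope u s y = u y / (y - s) := by
      simp [slope_def_field, hus]
    rw [this]
    exact le_of_lt (div_neg_of_pos_of_neg hy1 (by linarith [hy.2]))
  linarith
end
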